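/- Let (B, L) be a Banach SNL space, A a linear L-positive subspace of B, d ∈ B, C := A − d, and q^C the restriction of q_L to C (∞ off C). Then for b ∈ C, the subdifferential ∂q^C(b) equals Lb + A⁰, where A⁰ := {b* ∈ B* : ⟨a, b*⟩ = 0 for all a ∈ A}; and ∂q^C(b) = ∅ for b ∉ C. -/

import Mathlib

open NormedSpace

noncomputable def qL {B : Type*} [NormedAddCommGroup B] [NormedSpace ℝ B]
    (L : B →L[ℝ] StrongDual ℝ B) (b : B) : ℝ := (1 / 2) * L b b

/-- The subdifferential at `b` of the function `q^C` which equals `q_L` on `C`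
and `∞` off `C`:  `b* ∈ ∂q^C(b)` iff `b ∈ C` and
`q^C(c) ≥ q^C(b) + ⟨c − b, b*⟩` for all `c ∈ C`. -/
def subdiffQC {B : Type*} [NormedAddCommGroup B] [NormedSpace ℝ B]
    (L : B →L[ℝ] StrongDual ℝ B) (C : Set B) (b : B) : Set (StrongDual ℝ B) :=
  {b' | b ∈ C ∧ ∀ c ∈ C, qL L b + b' (c - b) ≤ qL L c}

/-! On `C = A - d` the subgradient inequality at `b` reads `(b' - L b) a ≤ q_L a` for all `a ∈ A`,
since `q_L (b + a) = q_L b + L b a + q_L a`. Replacing `a` by `t • a` and letting `t → 0⁺` shows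
that the linear functional `b' - L b` is `≤ 0` on `A`, hence `= 0` on the subspace `A`;
conversely `L`-positivity of `A` gives the inequality whenever `b' - L b` vanishes on `A`. -/

open Filter Topology

section

variable {B : Type*} [NormedAddCommGroup B] [NormedSpace ℝ B]

lemma qL_add (L : B →L[ℝ] StrongDual ℝ B) (hsym : ∀ b c : B, L c b = L b c) (b a : B) :
    qL L (b + a) = qL L b + L b a + qL L a := by
  simp only [qL, map_add, add_apply, hsym b a]
  ring

lemma qL_smul (L : B →L[ℝ] StrongDual ℝ B) (t : ℝ) (a : B) :
    qL L (t • a) = t ^ 2 * qL L a := by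
  simp only [qL, map_smul, smul_apply, smul_eq_mul]
  ring

lemma nonpos_of_forall_pos_le_mul {x q : ℝ} (h : ∀ t > 0, x ≤ t * q) : x ≤ 0 := by
  have hlim : Tendsto (fun t : ℝ => t * q) (𝓝[>] 0) (𝓝 0) :=
    ((continuous_mul_const q).tendsto' 0 0 (zero_mul q)).mono_left nhdsWithin_le_nhds
  exact ge_of_tendsto hlim (eventually_nhdsWithin_of_forall h)

lemma eq_zero_on_of_le_qL (L : B →L[ℝ] StrongDual ℝ B) (A : Subspace ℝ B)
    (φ : StrongDual ℝ B) (h : ∀ a ∈ A, φ a ≤ qL L a) : ∀ a ∈ A, φ a = 0 := by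
  have hnonpos : ∀ a ∈ A, φ a ≤ 0 := fun a ha =>
    nonpos_of_forall_pos_le_mul fun t ht => by
      have := h (t • a) (A.smul_mem t ha)
      rw [map_smul, smul_eq_mul, qL_smul, pow_two, mul_assoc] at this
      exact le_of_mul_le_mul_left this ht
  intro a ha
  have := hnonpos (-a) (A.neg_mem ha)
  rw [map_neg] at this
  linarith [hnonpos a ha]

lemma forall_mem_image_sub_iff {A : Subspace ℝ B} {d b : B}
    (hb : b ∈ (fun a => a - d) '' (A : Set B)) {P : B → Prop} :
    (∀ c ∈ (fun a => a - d) '' (A : Set B), P c) ↔ ∀ a ∈ A, P (b + a) := by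
  obtain ⟨a₀, ha₀, rfl⟩ := hb
  constructor
  · intro h a ha
    simpa [sub_add_eq_add_sub] using h _ ⟨a₀ + a, A.add_mem ha₀ ha, rfl⟩
  · rintro h _ ⟨a, ha, rfl⟩
    simpa using h (a - a₀) (A.sub_mem ha ha₀)

lemma subdiffQC_image_sub (L : B →L[ℝ] StrongDual ℝ B) (hsym : ∀ b c : B, L c b = L b c)
    (A : Subspace ℝ B) (hpos : ∀ a ∈ A, 0 ≤ qL L a) (d b : B)
    (hb : b ∈ (fun a => a - d) '' (A : Set B)) :
    subdiffQC L ((fun a => a - d) '' (A : Set B)) b =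
      {b' : StrongDual ℝ B | ∀ a ∈ A, (b' - L b) a = 0} := by
  ext b'
  have hsubgrad : (∀ a ∈ A, qL L b + b' a ≤ qL L (b + a)) ↔ ∀ a ∈ A, (b' - L b) a ≤ qL L a := by
    refine forall₂_congr fun a _ => ?_
    rw [qL_add L hsym, sub_apply]
    constructor <;> intro h <;> linarith
  simp only [subdiffQC, Set.mem_ofPred_eq, hb, true_and, forall_mem_image_sub_iff hb,
    add_sub_cancel_left, hsubgrad]
  exact ⟨eq_zero_on_of_le_qL L A _, fun h a ha => (h a ha).symm ▸ hpos a ha⟩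

lemma subdiffQC_eq_empty_of_notMem (L : B →L[ℝ] StrongDual ℝ B) {C : Set B} {b : B}
    (hb : b ∉ C) : subdiffQC L C b = ∅ :=
  Set.eq_empty_of_forall_notMem fun _ h => hb h.1

end

theorem stmt11_general {B : Type*} [NormedAddCommGroup B] [NormedSpace ℝ B]
    (L : B →L[ℝ] StrongDual ℝ B)
    (hsym : ∀ b c : B, L c b = L b c)
    (A : Subspace ℝ B) (hpos : ∀ a ∈ A, 0 ≤ qL L a)
    (d : B) (C : Set B) (hC : C = (fun a => a - d) '' (A : Set B)) :
    ∀ b : B,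
      (b ∈ C → subdiffQC L C b = {b' : StrongDual ℝ B | ∀ a ∈ A, (b' - L b) a = 0}) ∧
      (b ∉ C → subdiffQC L C b = ∅) := by
  subst hC
  exact fun b => ⟨subdiffQC_image_sub L hsym A hpos d b, subdiffQC_eq_empty_of_notMem L⟩

theorem stmt11 {B : Type*} [NormedAddCommGroup B] [NormedSpace ℝ B] [CompleteSpace B]
    [Nontrivial B]
    (L : B →L[ℝ] StrongDual ℝ B) (hL : ‖L‖ ≤ 1)
    (hsym : ∀ b c : B, L c b = L b c)
    (A : Subspace ℝ B) (hpos : ∀ a ∈ A, 0 ≤ qL L a)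
    (d : B) (C : Set B) (hC : C = (fun a => a - d) '' (A : Set B)) :
    ∀ b : B,
      (b ∈ C → subdiffQC L C b = {b' : StrongDual ℝ B | ∀ a ∈ A, (b' - L b) a = 0}) ∧
      (b ∉ C → subdiffQC L C b = ∅) :=
  stmt11_general L hsym A hpos d C hC
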